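/- Let d ≥ 1, L ≥ 0, let f : ℝ^d → ℝ be convex and L-Lipschitz with respect to the Euclidean norm, let μ > 0, and let x, x★ ∈ ℝ^d satisfy f(x★) ≤ f(x). Then ⟨∇f_μ(x), x★ − x⟩ ≤ 2 L μ. -/

import Mathlib

/-! Averaging translates of `f` keeps `f_μ` convex, and the Lipschitz bound puts `f_μ` within
`L μ` of `f`. The gradient inequality for convex functions then gives
`⟪∇f_μ x, x★ - x⟫ ≤ f_μ x★ - f_μ x ≤ f x★ - f x + 2 L μ ≤ 2 L μ`.
Where `f_μ` is not differentiable, `gradient` is `0` by convention and the bound is trivial. -/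

open MeasureTheory Metric Finset
open scoped RealInnerProductSpace

/-- The uniform probability measure on the closed Euclidean unit ball in `ℝ^d`. -/
noncomputable def ballUniform (d : ℕ) : Measure (EuclideanSpace ℝ (Fin d)) :=
  (volume (Metric.closedBall (0 : EuclideanSpace ℝ (Fin d)) 1))⁻¹ •
    volume.restrict (Metric.closedBall 0 1)

/-- The ball-smoothed function `f_μ(x) = E_{u ∼ U(B^d)} [f (x + μ u)]`. -/
noncomputable def smoothed (d : ℕ) (f : EuclideanSpace ℝ (Fin d) → ℝ) (μ : ℝ)
    (x : EuclideanSpace ℝ (Fin d)) : ℝ :=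
  ∫ u, f (x + μ • u) ∂(ballUniform d)

/-- The uniform (rotation-invariant) probability measure on the unit sphere `S^{d-1}`,
realized as the pushforward of the uniform measure on the unit ball under radial
normalization `u ↦ u / ‖u‖`. -/
noncomputable def sphereUniform (d : ℕ) : Measure (EuclideanSpace ℝ (Fin d)) :=
  (ballUniform d).map (fun u => ‖u‖⁻¹ • u)

open Set

theorem ConvexOn.inner_le_sub_of_hasGradientAt {E : Type*} [NormedAddCommGroup E]
    [InnerProductSpace ℝ E] [CompleteSpace E] {s : Set E} {g : E → ℝ} {g' x y : E}
    (hg : ConvexOn ℝ s g) (hx : x ∈ s) (hy : y ∈ s) (hg' : HasGradientAt g g' x) :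
    ⟪g', y - x⟫ ≤ g y - g x := by
  let ℓ : ℝ →ᵃ[ℝ] E := AffineMap.lineMap x y
  have hg'ℓ : HasFDerivAt g (InnerProductSpace.toDual ℝ E g') (ℓ 0) := by
    simpa [ℓ] using hg'.hasFDerivAt
  have hℓ : HasDerivAt (g ∘ ℓ) ⟪g', y - x⟫ 0 := by
    simpa using hg'ℓ.comp_hasDerivAt 0 AffineMap.hasDerivAt_lineMap
  simpa [slope, ℓ] using (hg.comp_affineMap ℓ).le_slope_of_hasDerivAt (x := 0) (y := 1)
    (by simpa [ℓ] using hx) (by simpa [ℓ] using hy) one_pos hℓ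

section BallUniform

variable {d : ℕ}

instance : IsProbabilityMeasure (ballUniform d) := by
  have h0 : volume (closedBall (0 : EuclideanSpace ℝ (Fin d)) 1) ≠ 0 :=
    (measure_closedBall_pos volume 0 one_pos).ne'
  constructor
  simp [ballUniform, ENNReal.inv_mul_cancel h0 measure_closedBall_lt_top.ne]

lemma ae_norm_le_one_ballUniform : ∀ᵐ u ∂(ballUniform d), ‖u‖ ≤ 1 := by
  refine Measure.ae_smul_measure ?_ _
  filter_upwards [ae_restrict_mem measurableSet_closedBall] with u hu
  simpa using hu

lemma Continuous.integrable_ballUniform {F : Type*} [NormedAddCommGroup F]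
    {g : EuclideanSpace ℝ (Fin d) → F} (hg : Continuous g) : Integrable g (ballUniform d) :=
  (hg.continuousOn.integrableOn_compact (isCompact_closedBall 0 1)).smul_measure
    (by simp [(measure_closedBall_pos volume (0 : EuclideanSpace ℝ (Fin d)) one_pos).ne'])

variable {f : EuclideanSpace ℝ (Fin d) → ℝ}

lemma Continuous.integrable_smoothing (hf : Continuous f) (μ : ℝ) (x : EuclideanSpace ℝ (Fin d)) :
    Integrable (fun u => f (x + μ • u)) (ballUniform d) :=
  (hf.comp (continuous_const.add (continuous_id.const_smul μ))).integrable_ballUniform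

lemma convexOn_smoothed (hconv : ConvexOn ℝ univ f) (hf : Continuous f) (μ : ℝ) :
    ConvexOn ℝ univ (smoothed d f μ) := by
  refine ⟨convex_univ, fun x _ y _ a b ha hb hab => ?_⟩
  have hx := (hf.integrable_smoothing μ x).const_mul a
  have hy := (hf.integrable_smoothing μ y).const_mul b
  calc smoothed d f μ (a • x + b • y)
      ≤ ∫ u, (a * f (x + μ • u) + b * f (y + μ • u)) ∂(ballUniform d) := by
        refine integral_mono (hf.integrable_smoothing μ _) (hx.add hy) fun u => ?_
        have hsplit : a • x + b • y + μ • u = a • (x + μ • u) + b • (y + μ • u) := by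
          rw [smul_add, smul_add, add_add_add_comm, ← add_smul, hab, one_smul]
        simpa only [hsplit, smul_eq_mul] using
          hconv.2 (mem_univ (x + μ • u)) (mem_univ (y + μ • u)) ha hb hab
    _ = a • smoothed d f μ x + b • smoothed d f μ y := by
        rw [integral_add hx hy, integral_const_mul, integral_const_mul]; rfl

lemma LipschitzWith.abs_smoothed_sub_le {K : NNReal} (hf : LipschitzWith K f) (μ : ℝ)
    (x : EuclideanSpace ℝ (Fin d)) : |smoothed d f μ x - f x| ≤ K * |μ| := by
  have hdiff : smoothed d f μ x - f x = ∫ u, (f (x + μ • u) - f x) ∂(ballUniform d) := by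
    rw [integral_sub (hf.continuous.integrable_smoothing μ x) (integrable_const _),
      integral_const, probReal_univ, one_smul, smoothed]
  have hbound : ∀ᵐ u ∂(ballUniform d), ‖f (x + μ • u) - f x‖ ≤ K * |μ| := by
    filter_upwards [ae_norm_le_one_ballUniform] with u hu
    calc ‖f (x + μ • u) - f x‖ ≤ K * ‖x + μ • u - x‖ := hf.norm_sub_le _ _
      _ = K * (|μ| * ‖u‖) := by rw [add_sub_cancel_left, norm_smul, Real.norm_eq_abs]
      _ ≤ K * |μ| := by gcongr; exact mul_le_of_le_one_right (abs_nonneg μ) hu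
  simpa [hdiff] using norm_integral_le_of_norm_le_const hbound

end BallUniform

theorem stmt16_general (d : ℕ) (L : ℝ) (hL : 0 ≤ L)
    (f : EuclideanSpace ℝ (Fin d) → ℝ)
    (hconv : ConvexOn ℝ Set.univ f)
    (hlip : ∀ x y, |f x - f y| ≤ L * ‖x - y‖)
    (μ : ℝ) (hμ : 0 < μ)
    (x xstar : EuclideanSpace ℝ (Fin d)) (hmin : f xstar ≤ f x) :
    ⟪gradient (smoothed d f μ) x, xstar - x⟫ ≤ 2 * L * μ := by
  have hf : LipschitzWith (Real.toNNReal L) f :=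
    .of_dist_le_mul fun y z => by simpa [Real.dist_eq, dist_eq_norm, hL] using hlip y z
  by_cases hdiff : DifferentiableAt ℝ (smoothed d f μ) x
  · have hgrad := (convexOn_smoothed hconv hf.continuous μ).inner_le_sub_of_hasGradientAt
      (mem_univ x) (mem_univ xstar) hdiff.hasGradientAt
    have hstar := abs_le.1 (hf.abs_smoothed_sub_le μ xstar)
    have hx := abs_le.1 (hf.abs_smoothed_sub_le μ x)
    rw [Real.coe_toNNReal L hL, abs_of_pos hμ] at hstar hx
    linarith
  · rw [gradient_eq_zero_of_not_differentiableAt hdiff, inner_zero_left]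
    positivity

theorem stmt16 (d : ℕ) (hd : 1 ≤ d) (L : ℝ) (hL : 0 ≤ L)
    (f : EuclideanSpace ℝ (Fin d) → ℝ)
    (hconv : ConvexOn ℝ Set.univ f)
    (hlip : ∀ x y, |f x - f y| ≤ L * ‖x - y‖)
    (μ : ℝ) (hμ : 0 < μ)
    (x xstar : EuclideanSpace ℝ (Fin d)) (hmin : f xstar ≤ f x) :
    ⟪gradient (smoothed d f μ) x, xstar - x⟫ ≤ 2 * L * μ :=
  stmt16_general d L hL f hconv hlip μ hμ x xstar hmin
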